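/- arXiv:2104.08242 — 2 statements merged into one kernel-verified Lean document; each statement's English description precedes it below -/
import Mathlib

section
/- For every t ≥ 0, θ_t satisfies the integral equation θ_t = μ_R/μ + ((μ − μ_R)/μ) F(t) + (β α_S/μ) Σ_{k≥1} k p_k ∫_0^t θ_s^{k−1} e^{−(β+ρ)(t−s)} ds, where the series of integrals Σ_{k≥1} k p_k ∫_0^t θ_s^{k−1} e^{−(β+ρ)(t−s)} ds converges. -/
open scoped BigOperators
open Real

noncomputable def vS (αS : ℝ) (p : ℕ → ℝ) (θ : ℝ) : ℝ := αS * ∑' k : ℕ, p k * θ ^ k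

noncomputable def hS (αS : ℝ) (p : ℕ → ℝ) (θ : ℝ) : ℝ := αS * ∑' k : ℕ, (k : ℝ) * p k * θ ^ k

noncomputable def hX (μ : ℝ) (θ : ℝ) : ℝ := μ * θ ^ 2

noncomputable def hR (μ μR β ρ : ℝ) (θ : ℝ) : ℝ := μR * θ + μ * ρ / β * (θ * (1 - θ))

noncomputable def hI (αS μ μR β ρ : ℝ) (p : ℕ → ℝ) (θ : ℝ) : ℝ :=
  hX μ θ - hS αS p θ - hR μ μR β ρ θ

noncomputable def F (β ρ t : ℝ) : ℝ := ρ / (β + ρ) + β / (β + ρ) * Real.exp (-(β + ρ) * t)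

/-! With `G` the generating function of `p`, we have `hS θ = αS θ G'(θ)`, so the ODE reads
`θ' = -(β + ρ) θ + (β μR / μ + ρ) + (β αS / μ) G'(θ)`. Variation of constants for the linear
part turns it into the integral equation, and dominated convergence (with `|θ| ≤ 1` and
`∑ k p_k < ∞`) lets the series `G'(θ_s) = ∑ k p_k θ_s^(k-1)` be integrated term by term. -/

open Set MeasureTheory
open scoped Interval

noncomputable def pgfDeriv (p : ℕ → ℝ) (x : ℝ) : ℝ := ∑' k : ℕ, (k : ℝ) * p k * x ^ (k - 1)

lemma tsum_natCast_mul_mul_pow_eq_mul_pgfDeriv (p : ℕ → ℝ) (x : ℝ) :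
    ∑' k : ℕ, (k : ℝ) * p k * x ^ k = x * pgfDeriv p x := by
  rw [pgfDeriv, ← tsum_mul_left]
  refine tsum_congr fun k => ?_
  cases k with
  | zero => simp
  | succ n => rw [Nat.add_sub_cancel, pow_succ]; ring

section pgfDeriv

variable {p : ℕ → ℝ} (hp : ∀ k, 0 ≤ p k)
include hp

lemma norm_natCast_mul_mul_pow_pred_le {x : ℝ} (hx : ‖x‖ ≤ 1) (k : ℕ) :
    ‖(k : ℝ) * p k * x ^ (k - 1)‖ ≤ k * p k := by
  have hkp : 0 ≤ (k : ℝ) * p k := mul_nonneg k.cast_nonneg (hp k)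
  rw [norm_mul, Real.norm_of_nonneg hkp, norm_pow]
  exact mul_le_of_le_one_right hkp (pow_le_one₀ (norm_nonneg x) hx)

variable (hmean : Summable fun k : ℕ => (k : ℝ) * p k)
include hmean

lemma hasSum_pgfDeriv {x : ℝ} (hx : ‖x‖ ≤ 1) :
    HasSum (fun k : ℕ => (k : ℝ) * p k * x ^ (k - 1)) (pgfDeriv p x) :=
  (hmean.of_norm_bounded (norm_natCast_mul_mul_pow_pred_le hp hx)).hasSum

lemma continuousOn_pgfDeriv : ContinuousOn (pgfDeriv p) (Metric.closedBall 0 1) :=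
  continuousOn_tsum (fun _ => by fun_prop) hmean fun k _ hx =>
    norm_natCast_mul_mul_pow_pred_le hp (mem_closedBall_zero_iff.mp hx) k

lemma hasSum_intervalIntegral_pgfDeriv {θ w : ℝ → ℝ} {a b : ℝ}
    (hθ : ContinuousOn θ (uIcc a b)) (hθ_mem : MapsTo θ (uIcc a b) (Metric.closedBall 0 1))
    (hw : ContinuousOn w (uIcc a b)) :
    HasSum (fun k : ℕ => (k : ℝ) * p k * ∫ s in a..b, θ s ^ (k - 1) * w s)
      (∫ s in a..b, pgfDeriv p (θ s) * w s) := by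
  simp_rw [← intervalIntegral.integral_const_mul, ← mul_assoc]
  have hθ_norm : ∀ s ∈ Ι a b, ‖θ s‖ ≤ 1 := fun s hs =>
    mem_closedBall_zero_iff.mp (hθ_mem (uIoc_subset_uIcc hs))
  refine intervalIntegral.hasSum_integral_of_dominated_convergence (fun k s => k * p k * ‖w s‖)
    (fun k => ?_) (fun k => ae_of_all _ fun s hs => ?_) (ae_of_all _ fun _ _ => hmean.mul_right _)
    ?_ (ae_of_all _ fun s hs => (hasSum_pgfDeriv hp hmean (hθ_norm s hs)).mul_right _)
  · exact (((continuousOn_const.mul (hθ.pow _)).mul hw).mono uIoc_subset_uIcc).aestronglyMeasurable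
      measurableSet_uIoc
  · rw [norm_mul]
    exact mul_le_mul_of_nonneg_right
      (norm_natCast_mul_mul_pow_pred_le hp (hθ_norm s hs) k) (norm_nonneg _)
  · simp_rw [tsum_mul_right]
    exact (continuousOn_const.mul hw.norm).intervalIntegrable

end pgfDeriv

lemma eq_exp_mul_add_integral_of_hasDerivAt {f g : ℝ → ℝ} {a b t : ℝ}
    (hf : ∀ s ∈ uIcc a t, HasDerivAt f (-b * f s + g s) s) (hg : ContinuousOn g (uIcc a t)) :
    f t = exp (-b * (t - a)) * f a + ∫ s in a..t, g s * exp (-b * (t - s)) := by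
  have hderiv : ∀ s ∈ uIcc a t,
      HasDerivAt (fun u => f u * exp (b * u)) (g s * exp (b * s)) s := by
    intro s hs
    have hexp : HasDerivAt (fun u => exp (b * u)) (exp (b * s) * b) s := by
      simpa using ((hasDerivAt_id s).const_mul b).exp
    exact ((hf s hs).fun_mul hexp).congr_deriv (by ring)
  have hftc := intervalIntegral.integral_eq_sub_of_hasDerivAt hderiv
    ((hg.mul (by fun_prop)).intervalIntegrable)
  have hfactor : ∫ s in a..t, g s * exp (-b * (t - s))
      = exp (-b * t) * ∫ s in a..t, g s * exp (b * s) := by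
    rw [← intervalIntegral.integral_const_mul]
    refine intervalIntegral.integral_congr fun s _ => ?_
    rw [show -b * (t - s) = -b * t + b * s by ring, exp_add]
    ring
  have hinv : exp (-b * t) * exp (b * t) = 1 := by rw [← exp_add]; simp
  rw [hfactor, hftc, show -b * (t - a) = -b * t + b * a by ring, exp_add]
  linear_combination -f t * hinv

lemma eq_div_add_exp_mul_add_integral_of_hasDerivAt {f g : ℝ → ℝ} {a b c t : ℝ} (hb : b ≠ 0)
    (hf : ∀ s ∈ uIcc a t, HasDerivAt f (-b * f s + c + g s) s) (hg : ContinuousOn g (uIcc a t)) :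
    f t = c / b + exp (-b * (t - a)) * (f a - c / b) + ∫ s in a..t, g s * exp (-b * (t - s)) := by
  -- `f - c / b` solves the equation without the constant term
  have hshift : ∀ s ∈ uIcc a t, HasDerivAt (fun u => f u - c / b) (-b * (f s - c / b) + g s) s :=
    fun s hs => ((hf s hs).sub_const (c / b)).congr_deriv (by field_simp; ring)
  linarith [eq_exp_mul_add_integral_of_hasDerivAt hshift hg]

lemma neg_mul_mul_hI_div_hX {αS μ μR β ρ x : ℝ} (p : ℕ → ℝ) (hβ : β ≠ 0) (hμ : μ ≠ 0)
    (hx : x ≠ 0) :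
    -β * x * hI αS μ μR β ρ p x / hX μ x
      = -(β + ρ) * x + (β * μR / μ + ρ) + β * αS / μ * pgfDeriv p x := by
  simp only [hI, hS, hX, hR, tsum_natCast_mul_mul_pow_eq_mul_pgfDeriv]
  field_simp
  ring

theorem stmt1_general
    (β ρ μ μR αS : ℝ) (p : ℕ → ℝ) (θ : ℝ → ℝ)
    (hβ : 0 < β) (hρ : 0 ≤ ρ) (hμ : 0 < μ)
    (hp : ∀ k, 0 ≤ p k)
    (hmeanSummable : Summable (fun k : ℕ => (k : ℝ) * p k))
    (hθ0 : θ 0 = 1)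
    (hθmem : ∀ t, 0 ≤ t → θ t ∈ Set.Ioc (0 : ℝ) 1)
    (hθderiv : ∀ t, 0 ≤ t →
      HasDerivAt θ (-β * θ t * hI αS μ μR β ρ p (θ t) / hX μ (θ t)) t)
    (t : ℝ) (ht : 0 ≤ t) :
    Summable (fun k : ℕ => (k : ℝ) * p k *
      ∫ s in (0 : ℝ)..t, θ s ^ (k - 1) * Real.exp (-(β + ρ) * (t - s))) ∧
    θ t = μR / μ + (μ - μR) / μ * F β ρ t +
      β * αS / μ * ∑' k : ℕ, (k : ℝ) * p k *
        ∫ s in (0 : ℝ)..t, θ s ^ (k - 1) * Real.exp (-(β + ρ) * (t - s)) := by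
  have hnonneg : ∀ s ∈ uIcc 0 t, 0 ≤ s := fun s hs => (uIcc_of_le ht ▸ hs).1
  have hθcont : ContinuousOn θ (uIcc 0 t) := fun s hs =>
    (hθderiv s (hnonneg s hs)).continuousAt.continuousWithinAt
  have hθball : MapsTo θ (uIcc 0 t) (Metric.closedBall 0 1) := fun s hs => by
    obtain ⟨hpos, hle⟩ := hθmem s (hnonneg s hs)
    exact mem_closedBall_zero_iff.mpr ((Real.norm_of_nonneg hpos.le).trans_le hle)
  have hsum := hasSum_intervalIntegral_pgfDeriv hp hmeanSummable hθcont hθball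
    (w := fun s => exp (-(β + ρ) * (t - s))) (by fun_prop)
  have hode : ∀ s ∈ uIcc 0 t, HasDerivAt θ
      (-(β + ρ) * θ s + (β * μR / μ + ρ) + β * αS / μ * pgfDeriv p (θ s)) s := fun s hs => by
    rw [← neg_mul_mul_hI_div_hX p hβ.ne' hμ.ne' (hθmem s (hnonneg s hs)).1.ne']
    exact hθderiv s (hnonneg s hs)
  have hvoc := eq_div_add_exp_mul_add_integral_of_hasDerivAt (by positivity) hode
    (continuousOn_const.mul ((continuousOn_pgfDeriv hp hmeanSummable).comp hθcont hθball))
  refine ⟨hsum.summable, ?_⟩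
  simp_rw [mul_assoc (β * αS / μ), intervalIntegral.integral_const_mul, sub_zero, hθ0] at hvoc
  rw [hvoc, hsum.tsum_eq, F]
  field_simp
  ring

theorem stmt1
    (β ρ μ μS μI μR αS : ℝ) (p : ℕ → ℝ) (θ : ℝ → ℝ)
    (hβ : 0 < β) (hρ : 0 ≤ ρ) (hμ : 0 < μ)
    (hμS : 0 ≤ μS) (hμI : 0 ≤ μI) (hμR : 0 ≤ μR)
    (hμsum : μS + μI + μR = μ)
    (hαS : αS ∈ Set.Ioc (0 : ℝ) 1)
    (hp : ∀ k, 0 ≤ p k)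
    (hpsummable : Summable p)
    (hpsum : ∑' k : ℕ, p k = 1)
    (hmeanSummable : Summable (fun k : ℕ => (k : ℝ) * p k))
    (hmeanPos : 0 < ∑' k : ℕ, (k : ℝ) * p k)
    (hμSdef : μS = αS * ∑' k : ℕ, (k : ℝ) * p k)
    (hθ0 : θ 0 = 1)
    (hθmem : ∀ t, 0 ≤ t → θ t ∈ Set.Ioc (0 : ℝ) 1)
    (hθderiv : ∀ t, 0 ≤ t →
      HasDerivAt θ (-β * θ t * hI αS μ μR β ρ p (θ t) / hX μ (θ t)) t)
    (t : ℝ) (ht : 0 ≤ t) :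
    Summable (fun k : ℕ => (k : ℝ) * p k *
      ∫ s in (0 : ℝ)..t, θ s ^ (k - 1) * Real.exp (-(β + ρ) * (t - s))) ∧
    θ t = μR / μ + (μ - μR) / μ * F β ρ t +
      β * αS / μ * ∑' k : ℕ, (k : ℝ) * p k *
        ∫ s in (0 : ℝ)..t, θ s ^ (k - 1) * Real.exp (-(β + ρ) * (t - s)) :=
  stmt1_general β ρ μ μR αS p θ hβ hρ hμ hp hmeanSummable hθ0 hθmem hθderiv t ht
end

section
/- For every integer k ≥ 1 and every t ≥ 0, one has β ∫_0^t θ_s^{k−1} e^{−(β+ρ)(t−s)} ds = θ_t^{k−1} − F(t) + β (k−1) ∫_0^t θ_s^{k−1} (h_I(θ_s)/h_X(θ_s)) F(t−s) ds. -/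
/-!
Along the ODE, `(θ ^ m)' = -β m θ ^ m h_I(θ)/h_X(θ)`, and `d/ds F(t - s) = β e^{-(β+ρ)(t-s)}`.
So the identity is the fundamental theorem of calculus on `[0, t]` for `s ↦ θ_s ^ m F(t - s)`,
with `m = k - 1`, whose boundary values are `θ_t ^ m` (as `F 0 = 1`) and `F t` (as `θ_0 = 1`).
-/

open scoped BigOperators
open Real

open Set intervalIntegral

lemma continuousOn_tsum_mul_pow {a : ℕ → ℝ} (ha : Summable a) :
    ContinuousOn (fun x => ∑' k, a k * x ^ k) (Icc (-1) 1) := by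
  refine continuousOn_tsum (fun k => (continuous_const.mul (continuous_pow k)).continuousOn)
    ha.abs fun k x hx => ?_
  rw [norm_mul, norm_pow, Real.norm_eq_abs, Real.norm_eq_abs]
  exact mul_le_of_le_one_right (abs_nonneg _) (pow_le_one₀ (abs_nonneg x) (abs_le.2 hx))

lemma continuousOn_hI (αS μ μR β ρ : ℝ) {p : ℕ → ℝ}
    (hmean : Summable (fun k : ℕ => (k : ℝ) * p k)) :
    ContinuousOn (hI αS μ μR β ρ p) (Icc (-1) 1) := by
  have hS_cont : ContinuousOn (hS αS p) (Icc (-1) 1) :=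
    continuousOn_const.mul (continuousOn_tsum_mul_pow hmean)
  unfold hI hX hR
  exact ((by fun_prop : Continuous fun x : ℝ => μ * x ^ 2).continuousOn.sub hS_cont).sub
    (by fun_prop)

lemma F_zero {β ρ : ℝ} (hβρ : β + ρ ≠ 0) : F β ρ 0 = 1 := by
  simp only [F, mul_zero, Real.exp_zero, mul_one]
  field_simp
  ring

lemma hasDerivAt_F_sub {β ρ : ℝ} (hβρ : β + ρ ≠ 0) (t s : ℝ) :
    HasDerivAt (fun s => F β ρ (t - s)) (β * Real.exp (-(β + ρ) * (t - s))) s := by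
  have hlin : HasDerivAt (fun s : ℝ => -(β + ρ) * (t - s)) (β + ρ) s := by
    simpa using ((hasDerivAt_id s).const_sub t).const_mul (-(β + ρ))
  refine ((hlin.exp.const_mul (β / (β + ρ))).const_add (ρ / (β + ρ))).congr_deriv ?_
  field_simp

lemma HasDerivAt.pow_of_mul_self {f : ℝ → ℝ} {c x : ℝ} (hf : HasDerivAt f (f x * c) x)
    (m : ℕ) :
    HasDerivAt (fun y => f y ^ m) (m * c * f x ^ m) x := by
  refine (hf.pow m).congr_deriv ?_
  rcases eq_or_ne m 0 with rfl | hm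
  · simp
  · rw [← pow_sub_one_mul hm]
    ring

theorem integral_pow_mul_exp_eq {β ρ t : ℝ} {θ q : ℝ → ℝ} (hβρ : β + ρ ≠ 0) (ht : 0 ≤ t)
    (hθ0 : θ 0 = 1) (hθ : ∀ s ∈ Icc 0 t, HasDerivAt θ (-β * θ s * q s) s)
    (hq : ContinuousOn q (Icc 0 t)) (m : ℕ) :
    β * ∫ s in (0 : ℝ)..t, θ s ^ m * Real.exp (-(β + ρ) * (t - s)) =
      θ t ^ m - F β ρ t + β * m * ∫ s in (0 : ℝ)..t, θ s ^ m * q s * F β ρ (t - s) := by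
  have hθcont : ContinuousOn θ (Icc 0 t) := fun s hs =>
    (hθ s hs).continuousAt.continuousWithinAt
  have hderiv : ∀ s ∈ uIcc 0 t, HasDerivAt (fun s => θ s ^ m * F β ρ (t - s))
      (-(β * m) * (θ s ^ m * q s * F β ρ (t - s)) +
        β * (θ s ^ m * Real.exp (-(β + ρ) * (t - s)))) s := by
    intro s hs
    rw [uIcc_of_le ht] at hs
    have hpow := ((hθ s hs).congr_deriv
      (by ring : -β * θ s * q s = θ s * (-β * q s))).pow_of_mul_self m
    refine (hpow.mul (hasDerivAt_F_sub hβρ t s)).congr_deriv ?_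
    ring
  have hA : IntervalIntegrable (fun s => θ s ^ m * q s * F β ρ (t - s))
      MeasureTheory.volume 0 t :=
    ContinuousOn.intervalIntegrable (by
      rw [uIcc_of_le ht]
      exact ((hθcont.pow m).mul hq).mul (by unfold F; fun_prop))
  have hB : IntervalIntegrable (fun s => θ s ^ m * Real.exp (-(β + ρ) * (t - s)))
      MeasureTheory.volume 0 t :=
    ContinuousOn.intervalIntegrable (by
      rw [uIcc_of_le ht]
      exact (hθcont.pow m).mul (by fun_prop))
  have hFTC := integral_eq_sub_of_hasDerivAt hderiv ((hA.const_mul _).add (hB.const_mul _))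
  rw [integral_add (hA.const_mul _) (hB.const_mul _), integral_const_mul, integral_const_mul,
    sub_self, F_zero hβρ, sub_zero, hθ0] at hFTC
  linear_combination hFTC

theorem stmt2_general
    (β ρ μ μR αS : ℝ) (p : ℕ → ℝ) (θ : ℝ → ℝ)
    (hβ : 0 < β) (hρ : 0 ≤ ρ) (hμ : 0 < μ)
    (hmeanSummable : Summable (fun k : ℕ => (k : ℝ) * p k))
    (hθ0 : θ 0 = 1)
    (hθmem : ∀ t, 0 ≤ t → θ t ∈ Set.Ioc (0 : ℝ) 1)
    (hθderiv : ∀ t, 0 ≤ t →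
      HasDerivAt θ (-β * θ t * hI αS μ μR β ρ p (θ t) / hX μ (θ t)) t)
    (k : ℕ) (hk : 1 ≤ k) (t : ℝ) (ht : 0 ≤ t) :
    β * ∫ s in (0 : ℝ)..t, θ s ^ (k - 1) * Real.exp (-(β + ρ) * (t - s)) =
      θ t ^ (k - 1) - F β ρ t +
        β * ((k : ℝ) - 1) *
          ∫ s in (0 : ℝ)..t,
            θ s ^ (k - 1) * (hI αS μ μR β ρ p (θ s) / hX μ (θ s)) * F β ρ (t - s) := by
  have hθcont : ContinuousOn θ (Icc 0 t) := fun s hs =>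
    (hθderiv s hs.1).continuousAt.continuousWithinAt
  have hq : ContinuousOn (fun s => hI αS μ μR β ρ p (θ s) / hX μ (θ s)) (Icc 0 t) := by
    refine ((continuousOn_hI αS μ μR β ρ hmeanSummable).comp hθcont fun s hs => ?_).div
      (by unfold hX; fun_prop) fun s hs => ?_
    · exact ⟨by linarith [(hθmem s hs.1).1], (hθmem s hs.1).2⟩
    · exact mul_ne_zero hμ.ne' (pow_ne_zero 2 (hθmem s hs.1).1.ne')
  rw [← Nat.cast_pred hk]
  exact integral_pow_mul_exp_eq (by linarith) ht hθ0
    (fun s hs => (hθderiv s hs.1).congr_deriv (mul_div_assoc _ _ _)) hq (k - 1)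

theorem stmt2
    (β ρ μ μS μI μR αS : ℝ) (p : ℕ → ℝ) (θ : ℝ → ℝ)
    (hβ : 0 < β) (hρ : 0 ≤ ρ) (hμ : 0 < μ)
    (hμS : 0 ≤ μS) (hμI : 0 ≤ μI) (hμR : 0 ≤ μR)
    (hμsum : μS + μI + μR = μ)
    (hαS : αS ∈ Set.Ioc (0 : ℝ) 1)
    (hp : ∀ k, 0 ≤ p k)
    (hpsummable : Summable p)
    (hpsum : ∑' k : ℕ, p k = 1)
    (hmeanSummable : Summable (fun k : ℕ => (k : ℝ) * p k))
    (hmeanPos : 0 < ∑' k : ℕ, (k : ℝ) * p k)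
    (hμSdef : μS = αS * ∑' k : ℕ, (k : ℝ) * p k)
    (hθ0 : θ 0 = 1)
    (hθmem : ∀ t, 0 ≤ t → θ t ∈ Set.Ioc (0 : ℝ) 1)
    (hθderiv : ∀ t, 0 ≤ t →
      HasDerivAt θ (-β * θ t * hI αS μ μR β ρ p (θ t) / hX μ (θ t)) t)
    (k : ℕ) (hk : 1 ≤ k) (t : ℝ) (ht : 0 ≤ t) :
    β * ∫ s in (0 : ℝ)..t, θ s ^ (k - 1) * Real.exp (-(β + ρ) * (t - s)) =
      θ t ^ (k - 1) - F β ρ t +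
        β * ((k : ℝ) - 1) *
          ∫ s in (0 : ℝ)..t,
            θ s ^ (k - 1) * (hI αS μ μR β ρ p (θ s) / hX μ (θ s)) * F β ρ (t - s) :=
  stmt2_general β ρ μ μR αS p θ hβ hρ hμ hmeanSummable hθ0 hθmem hθderiv k hk t ht
end
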